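/- Let K be an algebraically closed field of characteristic zero, f ∈ K[X] a polynomial of degree d ≥ 2, and ξ ∈ K a periodic point of f. Then the multiplicities aₙ(ξ) of ξ as a root of f⁽ⁿ⁾(X) − X are uniformly bounded over all n ≥ 1: there exists B such that aₙ(ξ) ≤ B for all n ≥ 1. -/
import Mathlib


open Polynomial

/-- The `n`-th compositional iterate of a polynomial, with `f⁽⁰⁾ = X`. -/
noncomputable def polyIter {K : Type*} [CommSemiring K] (f : K[X]) : ℕ → K[X]
  | 0 => X
  | n + 1 => f.comp (polyIter f n)

section Aux

variable {K : Type*} [Field K]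

lemma polyIter_eval (f : K[X]) : ∀ (n : ℕ) (x : K),
    (polyIter f n).eval x = (fun y => f.eval y)^[n] x
  | 0, x => by simp [polyIter]
  | n + 1, x => by
    rw [polyIter, eval_comp, polyIter_eval f n x, Function.iterate_succ_apply']

lemma polyIter_add (f : K[X]) (a b : ℕ) :
    polyIter f (a + b) = (polyIter f a).comp (polyIter f b) := by
  induction a with
  | zero => simp [polyIter]
  | succ a ih =>
    rw [Nat.succ_add, polyIter, polyIter, ih, ← comp_assoc]

lemma polyIter_mul (f : K[X]) (m : ℕ) : ∀ j, polyIter f (m * j) = polyIter (polyIter f m) j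
  | 0 => by simp [polyIter]
  | j + 1 => by
    have h : m * (j + 1) = m + m * j := by ring
    rw [h, polyIter_add, polyIter_mul f m j]
    rfl

lemma polyIter_natDegree (f : K[X]) : ∀ n, (polyIter f n).natDegree = f.natDegree ^ n
  | 0 => by simp [polyIter]
  | n + 1 => by rw [polyIter, natDegree_comp, polyIter_natDegree f n, pow_succ']

lemma polyIter_fixed (g : K[X]) (ξ : K) (h0 : g.eval ξ = ξ) (j : ℕ) :
    (polyIter g j).eval ξ = ξ := by
  rw [polyIter_eval]
  exact Function.IsFixedPt.iterate (show Function.IsFixedPt (fun y => g.eval y) ξ from h0) j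

lemma polyIter_deriv_eval (g : K[X]) (ξ : K) (h0 : g.eval ξ = ξ) :
    ∀ j, (derivative (polyIter g j)).eval ξ = ((derivative g).eval ξ) ^ j
  | 0 => by simp [polyIter]
  | j + 1 => by
    rw [polyIter, derivative_comp, eval_mul, eval_comp, polyIter_fixed g ξ h0 j,
      polyIter_deriv_eval g ξ h0 j, pow_succ]

lemma mult_le_one_of_deriv_ne [CharZero K] (p : K[X]) (ξ : K)
    (hd : (derivative p).eval ξ ≠ 0) : rootMultiplicity ξ p ≤ 1 := by
  by_cases hr : p.IsRoot ξ
  · have h := derivative_rootMultiplicity_of_root hr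
    have h0 : rootMultiplicity ξ (derivative p) = 0 :=
      rootMultiplicity_eq_zero (by simpa [IsRoot] using hd)
    omega
  · rw [rootMultiplicity_eq_zero hr]
    omega

lemma parabolic [CharZero K] (g : K[X]) (ξ : K) (h0 : g.eval ξ = ξ)
    (h1 : (derivative g).eval ξ = 1) (hne : g - X ≠ 0) :
    ∀ j, 1 ≤ j → rootMultiplicity ξ (polyIter g j - X) = rootMultiplicity ξ (g - X) := by
  classical
  set u : K[X] := g - X with hu_def
  set r : ℕ := rootMultiplicity ξ u with hr_def
  set π : K[X] := X - C ξ with hπ_def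
  set v : K[X] := u /ₘ π ^ r with hv_def
  set c : K := v.eval ξ with hc_def
  have hu0 : u.eval ξ = 0 := by simp [hu_def, h0]
  have hr1 : 1 ≤ r := (rootMultiplicity_pos hne).2 hu0
  have hufac : π ^ r * v = u := pow_mul_divByMonic_rootMultiplicity_eq u ξ
  have hc0 : c ≠ 0 := eval_divByMonic_pow_rootMultiplicity_ne_zero ξ hne
  -- r ≥ 2
  have hu'0 : (derivative u).eval ξ = 0 := by
    simp [hu_def, derivative_sub, h1]
  have hu'ne : derivative u ≠ 0 := by
    intro h
    have hdeg0 : u.natDegree = 0 := natDegree_eq_zero_of_derivative_eq_zero h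
    obtain ⟨a, ha⟩ := natDegree_eq_zero.1 hdeg0
    rw [← ha] at hu0
    simp at hu0
    exact hne (by rw [← ha, hu0, map_zero])
  have hr2 : 2 ≤ r := by
    have hpos : 0 < rootMultiplicity ξ (derivative u) :=
      (rootMultiplicity_pos hu'ne).2 hu'0
    have := derivative_rootMultiplicity_of_root (p := u) (t := ξ) hu0
    omega
  have key : ∀ j : ℕ, ∃ w : K[X], polyIter g j - X = π ^ r * w ∧ w.eval ξ = (j : K) * c := by
    intro j
    induction j with
    | zero => exact ⟨0, by simp [polyIter], by simp⟩
    | succ j ih =>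
      obtain ⟨w, hw, hwe⟩ := ih
      set G : K[X] := polyIter g j with hG_def
      have hGfix : G.eval ξ = ξ := polyIter_fixed g ξ h0 j
      refine ⟨w + (π ^ (r - 1) * w + 1) ^ r * v.comp G, ?_, ?_⟩
      · have hgG : polyIter g (j + 1) = g.comp G := rfl
        have hsplit : g.comp G = G + u.comp G := by
          have hg : g = X + u := by rw [hu_def]; ring
          rw [hg, add_comp, X_comp]
        have hπG : π.comp G = π ^ r * w + π := by
          rw [hπ_def, sub_comp, X_comp, C_comp]
          have : G - C ξ = (G - X) + (X - C ξ) := by ring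
          rw [this, hw]
        have hπr : π * π ^ (r - 1) = π ^ r := by
          rw [← pow_succ']
          congr 1
          omega
        have hGC : π.comp G = π * (π ^ (r - 1) * w + 1) := by
          rw [hπG, ← hπr]; ring
        have hucomp : u.comp G = π ^ r * ((π ^ (r - 1) * w + 1) ^ r * v.comp G) := by
          rw [← hufac, mul_comp, pow_comp, hGC, mul_pow, mul_assoc]
        rw [hgG, hsplit, hucomp]
        calc G + π ^ r * ((π ^ (r - 1) * w + 1) ^ r * v.comp G) - X
            = (G - X) + π ^ r * ((π ^ (r - 1) * w + 1) ^ r * v.comp G) := by ring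
          _ = π ^ r * w + π ^ r * ((π ^ (r - 1) * w + 1) ^ r * v.comp G) := by rw [hw]
          _ = π ^ r * (w + (π ^ (r - 1) * w + 1) ^ r * v.comp G) := by ring
      · have hπeval : π.eval ξ = 0 := by simp [hπ_def]
        have hπpow : (π ^ (r - 1)).eval ξ = 0 := by
          rw [eval_pow, hπeval, zero_pow]
          omega
        rw [eval_add, eval_mul, eval_pow, eval_add, eval_mul, hπpow, eval_one, eval_comp,
          hGfix, hwe]
        push_cast
        ring
  intro j hj
  obtain ⟨w, hw, hwe⟩ := key j
  have hwne : w.eval ξ ≠ 0 := by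
    rw [hwe]
    exact mul_ne_zero (Nat.cast_ne_zero.2 (by omega)) hc0
  have hwmult : rootMultiplicity ξ w = 0 := rootMultiplicity_eq_zero hwne
  have hwne' : w ≠ 0 := fun h => hwne (by rw [h]; simp)
  have hprod : π ^ r * w ≠ 0 :=
    mul_ne_zero (pow_ne_zero _ (X_sub_C_ne_zero ξ)) hwne'
  rw [hw, rootMultiplicity_mul hprod, hwmult, hπ_def, rootMultiplicity_X_sub_C_pow]
  omega

end Aux

/-- over an algebraically closed field of characteristic zero, the
multiplicities of a periodic point `ξ` as a root of `f⁽ⁿ⁾(X) - X` are uniformly bounded. -/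
theorem stmt9 {K : Type*} [Field K] [IsAlgClosed K] [CharZero K]
    (f : K[X]) (d : ℕ) (hd : 2 ≤ d) (hdeg : f.natDegree = d)
    (ξ : K) (hξ : ξ ∈ Function.periodicPts (fun x => f.eval x)) :
    ∃ B : ℕ, ∀ n : ℕ, 1 ≤ n → rootMultiplicity ξ (polyIter f n - X) ≤ B := by
  classical
  set φ : K → K := fun x => f.eval x with hφ_def
  set m : ℕ := Function.minimalPeriod φ ξ with hm_def
  have hm : 0 < m := Function.minimalPeriod_pos_of_mem_periodicPts hξ
  set g : K[X] := polyIter f m with hg_def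
  have hgfix : g.eval ξ = ξ := by
    rw [hg_def, polyIter_eval]
    exact Function.isPeriodicPt_minimalPeriod φ ξ
  set lam : K := (derivative g).eval ξ with hlam_def
  set k : ℕ := orderOf lam with hk_def
  refine ⟨max 1 (rootMultiplicity ξ (polyIter g k - X)), ?_⟩
  intro n hn
  -- degree facts
  have hiter_ne : ∀ N, 1 ≤ N → polyIter f N - X ≠ 0 := by
    intro N hN hEq
    have hX : polyIter f N = X := by
      have := sub_eq_zero.1 hEq
      exact this
    have hND : (polyIter f N).natDegree = d ^ N := by
      rw [polyIter_natDegree, hdeg]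
    rw [hX, natDegree_X] at hND
    have : 2 ≤ d ^ N := by
      calc 2 ≤ d := hd
        _ = d ^ 1 := (pow_one d).symm
        _ ≤ d ^ N := Nat.pow_le_pow_right (by omega) hN
    omega
  by_cases hroot : φ^[n] ξ = ξ
  · -- m ∣ n
    have hdvd : m ∣ n := Function.IsPeriodicPt.minimalPeriod_dvd hroot
    obtain ⟨j, hj⟩ := hdvd
    have hj1 : 1 ≤ j := by
      rcases Nat.eq_zero_or_pos j with h | h
      · subst h; simp at hj; omega
      · exact h
    have hgj : polyIter f n = polyIter g j := by rw [hj, hg_def, ← polyIter_mul]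
    have hderiv : (derivative (polyIter g j)).eval ξ = lam ^ j :=
      polyIter_deriv_eval g ξ hgfix j
    by_cases hlj : lam ^ j = 1
    · -- parabolic case
      have hfin : IsOfFinOrder lam := isOfFinOrder_iff_pow_eq_one.2 ⟨j, by omega, hlj⟩
      have hkpos : 0 < k := hfin.orderOf_pos
      have hkdvd : k ∣ j := orderOf_dvd_of_pow_eq_one hlj
      obtain ⟨i, hi⟩ := hkdvd
      have hi1 : 1 ≤ i := by
        rcases Nat.eq_zero_or_pos i with h | h
        · subst h; simp at hi; omega
        · exact h
      set h : K[X] := polyIter g k with hh_def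
      have hhfix : h.eval ξ = ξ := polyIter_fixed g ξ hgfix k
      have hhder : (derivative h).eval ξ = 1 := by
        rw [hh_def, polyIter_deriv_eval g ξ hgfix k, ← hlam_def, hk_def, pow_orderOf_eq_one]
      have hhne : h - X ≠ 0 := by
        have : h = polyIter f (m * k) := by rw [hh_def, hg_def, ← polyIter_mul]
        rw [this]
        exact hiter_ne (m * k) (Nat.one_le_iff_ne_zero.2 (by positivity))
      have heq : polyIter g j = polyIter h i := by
        rw [hi, hh_def]; exact polyIter_mul g k i
      rw [hgj, heq, parabolic h ξ hhfix hhder hhne i hi1]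
      exact le_max_right _ _
    · -- multiplicity at most 1
      have : rootMultiplicity ξ (polyIter f n - X) ≤ 1 := by
        apply mult_le_one_of_deriv_ne
        rw [derivative_sub, derivative_X, eval_sub, eval_one, hgj, hderiv]
        exact sub_ne_zero.2 hlj
      exact le_trans this (le_max_left _ _)
  · -- not a root at all
    have hnr : ¬ (polyIter f n - X).IsRoot ξ := by
      simp only [IsRoot.def, eval_sub, eval_X, polyIter_eval, sub_eq_zero]
      exact hroot
    rw [rootMultiplicity_eq_zero hnr]
    exact Nat.zero_le _
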